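/- Let F be a field with a nontrivial nonarchimedean absolute value (e.g. ℚ_p) and let r ≤ min(n,m). The topological closure in Mat_{n×m}(F) of the set {X : rank X = r} equals {X : rank X ≤ r}. Consequently, for r ≤ p, the rank-r locus is contained in the closure of the rank-p locus, i.e. the GL_n(F)×GL_m(F)-orbits on Mat_{n×m}(F) are totally ordered by the closure order. -/

import Mathlib

/-!
`X.rank ≤ r` holds iff `det (A * X * B) = 0` for all `A : Matrix (Fin (r+1)) m K` and
`B : Matrix n (Fin (r+1)) K`: a matrix of larger rank satisfies `A * X * B = 1` for suitable
`A`, `B`. So the rank-`≤ r` locus is closed. Conversely, if `X` has rank `s` below both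
dimensions, pick `w ≠ 0` in its kernel, a functional `φ` with `φ w = 1` and `u` outside its
column space; then `X + c • (φ ⊗ u)` has column space `col X ⊔ K ∙ u`, hence rank `s + 1`, for
every `c ≠ 0`, and tends to `X` as `c → 0`.
-/

open Module Submodule Set Topology Filter

namespace LinearMap

variable {K V W : Type*} [Field K] [AddCommGroup V] [Module K V] [AddCommGroup W] [Module K W]

theorem range_add_smul_smulRight {f : V →ₗ[K] W} {φ : V →ₗ[K] K} {w : V} (hw : f w = 0)
    (hφ : φ w = 1) (u : W) {c : K} (hc : c ≠ 0) :
    range (f + c • φ.smulRight u) = range f ⊔ K ∙ u := by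
  set g := f + c • φ.smulRight u
  have hg : ∀ v, g v = f v + (c * φ v) • u := fun v => by simp [g, mul_smul]
  have hu : u ∈ range g := ⟨c⁻¹ • w, by simp [hg, hw, hφ, hc]⟩
  refine le_antisymm ?_ (sup_le ?_ ((span_singleton_le_iff_mem _ _).2 hu))
  · rintro _ ⟨v, rfl⟩
    rw [hg]
    exact add_mem (mem_sup_left ⟨v, rfl⟩) (mem_sup_right (smul_mem _ _ (mem_span_singleton_self u)))
  · rintro _ ⟨v, rfl⟩
    rw [eq_sub_of_add_eq (hg v).symm]
    exact sub_mem ⟨v, rfl⟩ (smul_mem _ _ hu)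

theorem exists_finrank_range_add_smul_eq_succ [FiniteDimensional K V] [FiniteDimensional K W]
    (f : V →ₗ[K] W) (hV : finrank K (range f) < finrank K V)
    (hW : finrank K (range f) < finrank K W) :
    ∃ e : V →ₗ[K] W, ∀ c : K, c ≠ 0 → finrank K (range (f + c • e)) = finrank K (range f) + 1 := by
  have hker : ker f ≠ ⊥ := fun h => by
    have := f.finrank_range_add_finrank_ker
    rw [h, finrank_bot] at this
    omega
  obtain ⟨w, hw, hw0⟩ := exists_mem_ne_zero_of_ne_bot hker
  obtain ⟨φ, hφ⟩ := Module.Projective.exists_dual_eq_one K hw0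
  obtain ⟨u, -, hu⟩ := SetLike.exists_of_lt (lt_top_iff_ne_top.2 fun h : range f = ⊤ => by
    rw [h, finrank_top] at hW
    exact hW.false)
  exact ⟨φ.smulRight u, fun c hc => by
    rw [range_add_smul_smulRight hw hφ u hc, finrank_sup_span_singleton hu]⟩

theorem exists_comp_comp_eq_id_of_le_finrank_range (f : V →ₗ[K] W) {k : ℕ}
    (hk : k ≤ finrank K (range f)) :
    ∃ (g : (Fin k → K) →ₗ[K] V) (h : W →ₗ[K] Fin k → K), h ∘ₗ f ∘ₗ g = id := by
  obtain ⟨v, hv⟩ := exists_linearIndependent_of_le_finrank hk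
  choose x hx using fun i => (v i).2
  have hfx : f ∘ₗ Fintype.linearCombination K x =
      Fintype.linearCombination K (Subtype.val ∘ v) := by
    ext i
    simp [hx]
  obtain ⟨h, hh⟩ := exists_leftInverse_of_injective (f ∘ₗ Fintype.linearCombination K x) <| by
    rw [hfx, ker_eq_bot, ← linearIndependent_iff_injective_fintypeLinearCombination]
    exact hv.map' _ (ker_subtype _)
  exact ⟨_, h, hh⟩

end LinearMap

namespace Matrix

variable {K m n : Type*} [Field K] [Fintype n]

theorem rank_eq_finrank_range_toLin' [DecidableEq n] (X : Matrix m n K) :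
    X.rank = finrank K (LinearMap.range (toLin' X)) := rfl

variable [Fintype m]

theorem exists_rank_add_smul_eq_succ (X : Matrix m n K) (hm : X.rank < Fintype.card m)
    (hn : X.rank < Fintype.card n) :
    ∃ E : Matrix m n K, ∀ c : K, c ≠ 0 → (X + c • E).rank = X.rank + 1 := by
  classical
  obtain ⟨e, he⟩ := (toLin' X).exists_finrank_range_add_smul_eq_succ
    (by simpa [rank_eq_finrank_range_toLin'] using hn)
    (by simpa [rank_eq_finrank_range_toLin'] using hm)
  refine ⟨LinearMap.toMatrix' e, fun c hc => ?_⟩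
  rw [rank_eq_finrank_range_toLin', map_add, map_smul, toLin'_toMatrix', he c hc,
    rank_eq_finrank_range_toLin']

theorem exists_mul_mul_eq_one_of_le_rank (X : Matrix m n K) {k : ℕ} (hk : k ≤ X.rank) :
    ∃ (A : Matrix (Fin k) m K) (B : Matrix n (Fin k) K), A * X * B = 1 := by
  classical
  obtain ⟨g, h, hhg⟩ := (toLin' X).exists_comp_comp_eq_id_of_le_finrank_range hk
  refine ⟨LinearMap.toMatrix' h, LinearMap.toMatrix' g, ?_⟩
  apply toLin'.injective
  rw [toLin'_mul, toLin'_mul, toLin'_toMatrix', toLin'_toMatrix', LinearMap.comp_assoc, hhg,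
    toLin'_one]

section Topology

variable [TopologicalSpace K] [IsTopologicalRing K]

theorem isClosed_setOf_rank_le [T1Space K] (r : ℕ) : IsClosed {X : Matrix m n K | X.rank ≤ r} := by
  classical
  have hset : {X : Matrix m n K | X.rank ≤ r} =
      ⋂ (A : Matrix (Fin (r + 1)) m K) (B : Matrix n (Fin (r + 1)) K),
        (fun X => (A * X * B).det) ⁻¹' {0} := by
    ext X
    simp only [mem_ofPred_eq, mem_iInter, mem_preimage, mem_singleton_iff]
    constructor
    · intro hX A B
      by_contra hdet
      have := (rank_of_det_ne_zero hdet).symm.trans_le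
        ((rank_mul_le_left _ _).trans (rank_mul_le_right _ _))
      rw [Fintype.card_fin] at this
      omega
    · intro h
      by_contra! hX
      obtain ⟨A, B, hAB⟩ := X.exists_mul_mul_eq_one_of_le_rank hX
      simpa [hAB] using h A B
  rw [hset]
  exact isClosed_iInter fun A => isClosed_iInter fun B =>
    isClosed_singleton.preimage (by fun_prop)

theorem setOf_rank_eq_subset_closure_setOf_rank_eq_succ [NeBot (𝓝[≠] (0 : K))] {p : ℕ}
    (hm : p < Fintype.card m) (hn : p < Fintype.card n) :
    {X : Matrix m n K | X.rank = p} ⊆ closure {X | X.rank = p + 1} := by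
  rintro X rfl
  obtain ⟨E, hE⟩ := X.exists_rank_add_smul_eq_succ hm hn
  have hlim : Tendsto (fun c : K => X + c • E) (𝓝[≠] 0) (𝓝 X) :=
    ((continuous_const.add (continuous_id.smul continuous_const)).tendsto' 0 X
      (by simp)).mono_left nhdsWithin_le_nhds
  exact mem_closure_of_tendsto hlim (eventually_mem_nhdsWithin.mono hE)

theorem closure_setOf_rank_eq_mono [NeBot (𝓝[≠] (0 : K))] {p q : ℕ} (hpq : p ≤ q)
    (hm : q ≤ Fintype.card m) (hn : q ≤ Fintype.card n) :
    closure {X : Matrix m n K | X.rank = p} ⊆ closure {X | X.rank = q} := by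
  induction q, hpq using Nat.le_induction with
  | base => rfl
  | succ q _ ih =>
    exact (ih (by omega) (by omega)).trans <| closure_minimal
      (setOf_rank_eq_subset_closure_setOf_rank_eq_succ (by omega) (by omega)) isClosed_closure

end Topology

end Matrix

theorem closure_rank_eq_general {F : Type*} [NontriviallyNormedField F]
    (n m r : ℕ) (hr : r ≤ min n m) :
    closure {X : Matrix (Fin n) (Fin m) F | X.rank = r} =
      {X : Matrix (Fin n) (Fin m) F | X.rank ≤ r} ∧
    ∀ p : ℕ, r ≤ p → p ≤ min n m →
      {X : Matrix (Fin n) (Fin m) F | X.rank = r} ⊆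
        closure {X : Matrix (Fin n) (Fin m) F | X.rank = p} := by
  have chain {p q : ℕ} (hpq : p ≤ q) (hq : q ≤ min n m) :
      closure {X : Matrix (Fin n) (Fin m) F | X.rank = p} ⊆ closure {X | X.rank = q} :=
    Matrix.closure_setOf_rank_eq_mono hpq (by simpa using (le_min_iff.1 hq).1)
      (by simpa using (le_min_iff.1 hq).2)
  refine ⟨subset_antisymm ?_ fun X hX => chain hX hr (subset_closure rfl),
    fun p hrp hp X hX => chain hrp hp (subset_closure hX)⟩
  exact closure_minimal (fun X hX => hX.le) (Matrix.isClosed_setOf_rank_le r)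

/-- Over a field with a nontrivial nonarchimedean absolute value, the closure of the set of
`n × m` matrices of rank exactly `r` (with `r ≤ min n m`) is the set of matrices of rank at
most `r`; consequently the rank strata are totally ordered by the closure order. -/
theorem closure_rank_eq {F : Type*} [NontriviallyNormedField F]
    (hna : IsNonarchimedean (fun x : F => ‖x‖)) (n m r : ℕ) (hr : r ≤ min n m) :
    closure {X : Matrix (Fin n) (Fin m) F | X.rank = r} =
      {X : Matrix (Fin n) (Fin m) F | X.rank ≤ r} ∧
    ∀ p : ℕ, r ≤ p → p ≤ min n m →
      {X : Matrix (Fin n) (Fin m) F | X.rank = r} ⊆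
        closure {X : Matrix (Fin n) (Fin m) F | X.rank = p} :=
  closure_rank_eq_general n m r hr
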